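/- Let P be a dag, T a dag tree decomposition of P rooted at bag B with children subtrees over bags B_1,...,B_l, and G a dag. For any fixed homomorphism φ_B : P(B) → G, there is a bijection between the set of homomorphisms P(B̄) → G extending φ_B and the product over i of the sets of homomorphisms P(B̄_i) → G extending φ_B. Consequently hom(P(B̄), G, φ_B) = Π_{i=1}^l hom(P(B̄_i), G, φ_B). -/

import Mathlib

/-!
A homomorphism on the part of the dag below `b` is determined by its restrictions to the
parts below the children of `b`, and conversely any family of homomorphisms on those parts
that agree with `φB` glues to one on the whole. Gluing is well defined because the parts
below two distinct children meet only inside the set reachable from the bag of `b`: every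
tree path between their subtrees passes through `b`, so the path property of the
decomposition applies. It yields a homomorphism because every arc lies in the set reachable
from the single bag it starts from, and that bag is `b` itself or lies below one child.
-/

/-- A source of a digraph (relation `r`): a vertex with no incoming arc. -/
def IsSource {V : Type*} (r : V → V → Prop) (v : V) : Prop := ∀ u, ¬ r u v

/-- A digraph is acyclic if it has no directed cycle. -/
def DigraphAcyclic {V : Type*} (r : V → V → Prop) : Prop :=
  ∀ v, ¬ Relation.TransGen r v v

/-- `r` is an orientation of the simple graph `G`: every edge gets exactly one direction. -/
def IsOrientationOf {V : Type*} (G : SimpleGraph V) (r : V → V → Prop) : Prop :=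
  (∀ u v, G.Adj u v ↔ (r u v ∨ r v u)) ∧ ∀ u v, r u v → ¬ r v u

/-- The set of vertices of the digraph `r` reachable from the vertex set `X`. -/
def Reach {V : Type*} (r : V → V → Prop) (X : Set V) : Set V :=
  {v | ∃ u ∈ X, Relation.ReflTransGen r u v}

/-- A dag tree decomposition of the dag `r`: a tree `T` whose nodes carry bags of
sources of `r`, covering all sources, such that whenever a node `i` lies on the tree
path between nodes `j` and `k`, the sets reachable from the bags of `j` and `k`
intersect only inside the set reachable from the bag of `i`. -/
structure IsDTD {V ι : Type*} (r : V → V → Prop) (T : SimpleGraph ι)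
    (bag : ι → Set V) : Prop where
  isTree : T.IsTree
  bag_subset_sources : ∀ i, bag i ⊆ {v | IsSource r v}
  bag_union : (⋃ i, bag i) = {v | IsSource r v}
  path_prop : ∀ (i j k : ι) (p : T.Walk j k), p.IsPath → i ∈ p.support →
    Reach r (bag j) ∩ Reach r (bag k) ⊆ Reach r (bag i)

/-- `j` belongs to the subtree of `T` (rooted at `ρ`) rooted at `i`:
every path from the root `ρ` to `j` passes through `i`. -/
def InSubtree {ι : Type*} (T : SimpleGraph ι) (ρ i j : ι) : Prop :=
  ∀ p : T.Walk ρ j, p.IsPath → i ∈ p.support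

/-- `i` is a child of `b` in the tree `T` rooted at `ρ`. -/
def IsChild {ι : Type*} (T : SimpleGraph ι) (ρ b i : ι) : Prop :=
  T.Adj b i ∧ InSubtree T ρ b i

/-- The down-closure of the node `i`: the union of all bags in the subtree rooted
at `i`. -/
def DownClosure {V ι : Type*} (T : SimpleGraph ι) (ρ : ι) (bag : ι → Set V)
    (i : ι) : Set V :=
  ⋃ j ∈ {j | InSubtree T ρ i j}, bag j

namespace SimpleGraph

variable {V : Type*} {G : SimpleGraph V}

lemma IsAcyclic.eq_start_of_mem_support_of_snd_ne (hG : G.IsAcyclic) {u v w x : V}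
    {p : G.Walk u v} {q : G.Walk u w} (hp : p.IsPath) (hq : q.IsPath) (hsnd : p.snd ≠ q.snd)
    (hxp : x ∈ p.support) (hxq : x ∈ q.support) : x = u := by
  classical
  by_contra hxu
  have := congrArg (fun c : G.Path u x => c.1.snd) <|
    (hG.subsingleton_path u x).elim ⟨_, hp.takeUntil hxp⟩ ⟨_, hq.takeUntil hxq⟩
  simp only [Walk.snd_takeUntil hxu] at this
  exact hsnd this

lemma IsAcyclic.isPath_reverse_append (hG : G.IsAcyclic) {u v w : V}
    {p : G.Walk u v} {q : G.Walk u w} (hp : p.IsPath) (hq : q.IsPath) (hsnd : p.snd ≠ q.snd) :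
    (p.reverse.append q).IsPath := by
  have hq' := hq.support_nodup
  rw [← Walk.cons_tail_support] at hq'
  rw [Walk.isPath_def, Walk.support_append, Walk.support_reverse, List.nodup_append']
  refine ⟨List.nodup_reverse.mpr hp.support_nodup, hq'.of_cons, fun x hxp hxq => ?_⟩
  obtain rfl := hG.eq_start_of_mem_support_of_snd_ne hp hq hsnd (List.mem_reverse.mp hxp)
    (List.mem_of_mem_tail hxq)
  exact (List.nodup_cons.mp hq').1 hxq

end SimpleGraph

section RootedTree

open SimpleGraph

variable {ι : Type*} {T : SimpleGraph ι} {ρ b i j k : ι}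

lemma inSubtree_iff_mem_support (hT : T.IsAcyclic) {p : T.Walk ρ j} (hp : p.IsPath) :
    InSubtree T ρ i j ↔ i ∈ p.support := by
  refine ⟨fun h => h p hp, fun hi q hq => ?_⟩
  rwa [show q = p from congrArg Subtype.val ((hT.subsingleton_path ρ j).elim ⟨q, hq⟩ ⟨p, hp⟩)]

lemma InSubtree.trans (hbi : InSubtree T ρ b i) (hij : InSubtree T ρ i j) :
    InSubtree T ρ b j := by
  classical
  intro p hp
  exact p.support_takeUntil_subset_support (hij p hp) (hbi _ (hp.takeUntil _))

lemma InSubtree.eq_or_exists_isChild (hT : T.IsTree) (hbj : InSubtree T ρ b j) :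
    j = b ∨ ∃ i, IsChild T ρ b i ∧ InSubtree T ρ i j := by
  obtain ⟨p, hp, -⟩ := hT.existsUnique_path ρ j
  obtain ⟨q, q', -, -, rfl⟩ := hp.mem_support_iff_exists_append.mp (hbj p hp)
  cases q' with
  | nil => exact Or.inl rfl
  | @cons _ i _ hadj q'' =>
    have hq : (q.concat hadj).IsPath := by
      rw [← Walk.concat_append] at hp
      exact hp.of_append_left
    refine Or.inr ⟨i, ⟨hadj, ?_⟩, ?_⟩
    · rw [inSubtree_iff_mem_support hT.isAcyclic hq, Walk.support_concat]
      exact List.mem_append_left _ q.end_mem_support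
    · rw [inSubtree_iff_mem_support hT.isAcyclic hp]
      simp

lemma IsChild.exists_isPath_cons (hT : T.IsTree) (hi : IsChild T ρ b i)
    (hj : InSubtree T ρ i j) : ∃ c : T.Walk i j, (Walk.cons hi.1 c).IsPath := by
  obtain ⟨p, hp, -⟩ := hT.existsUnique_path ρ j
  obtain ⟨a, c, ha, -, rfl⟩ := hp.mem_support_iff_exists_append.mp (hj p hp)
  obtain ⟨a₀, ha₀, -⟩ := hT.existsUnique_path ρ b
  rw [hT.isAcyclic.path_concat ha₀ ha hi.1 (hi.2 a ha), Walk.concat_append] at hp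
  exact ⟨c, hp.of_append_right⟩

lemma exists_isPath_mem_support_of_isChild (hT : T.IsTree) {i' : ι} (hii' : i ≠ i')
    (hi : IsChild T ρ b i) (hi' : IsChild T ρ b i') (hj : InSubtree T ρ i j)
    (hk : InSubtree T ρ i' k) : ∃ p : T.Walk j k, p.IsPath ∧ b ∈ p.support := by
  obtain ⟨c, hc⟩ := hi.exists_isPath_cons hT hj
  obtain ⟨c', hc'⟩ := hi'.exists_isPath_cons hT hk
  exact ⟨_, hT.isAcyclic.isPath_reverse_append hc hc' (by simpa using hii'), by simp⟩

end RootedTree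

section Gluing

variable {V W κ : Type*} {R : Set V}

/-- The paper's `hom(P(D), G, φ)` is the cardinality of this set. -/
def homsExtending (r : V → V → Prop) (s : W → W → Prop) (D : Set V) (φ : R → W) :
    Set (D → W) :=
  {ψ | (∀ u v : D, r u v → s (ψ u) (ψ v)) ∧
    ∀ (x : V) (hx : x ∈ R) (hx' : x ∈ D), ψ ⟨x, hx'⟩ = φ ⟨x, hx⟩}

structure IsGluing (r : V → V → Prop) (R D : Set V) (D' : κ → Set V) : Prop where
  subset : ∀ i, D' i ⊆ D
  cover : ∀ x ∈ D, x ∉ R → ∃ i, x ∈ D' i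
  inter_subset : Pairwise fun i j => D' i ∩ D' j ⊆ R
  rel : ∀ u ∈ D, ∀ v ∈ D, r u v → u ∈ R ∧ v ∈ R ∨ ∃ i, u ∈ D' i ∧ v ∈ D' i

variable {r : V → V → Prop} {s : W → W → Prop} {D : Set V} {D' : κ → Set V} {φ : R → W}

def homsExtending.restrict {D₁ D₂ : Set V} (h : D₁ ⊆ D₂) (ψ : homsExtending r s D₂ φ) :
    homsExtending r s D₁ φ :=
  ⟨fun y => ψ.1 (Set.inclusion h y), fun _ _ huv => ψ.2.1 _ _ huv,
    fun x hx _ => ψ.2.2 x hx _⟩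

namespace IsGluing

variable (hG : IsGluing r R D D')

open Classical in
noncomputable def glue (φ : R → W) (Ψ : ∀ i, homsExtending r s (D' i) φ) (x : D) : W :=
  if hx : x.1 ∈ R then φ ⟨x, hx⟩
  else (Ψ (hG.cover x x.2 hx).choose).1 ⟨x, (hG.cover x x.2 hx).choose_spec⟩

lemma glue_of_mem_base (Ψ : ∀ i, homsExtending r s (D' i) φ) {x : D} (hx : x.1 ∈ R) :
    hG.glue φ Ψ x = φ ⟨x, hx⟩ :=
  dif_pos hx

lemma glue_of_mem (Ψ : ∀ i, homsExtending r s (D' i) φ) {i : κ} {x : D} (hx : x.1 ∈ D' i) :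
    hG.glue φ Ψ x = (Ψ i).1 ⟨x, hx⟩ := by
  by_cases hR : x.1 ∈ R
  · rw [hG.glue_of_mem_base Ψ hR]
    exact ((Ψ i).2.2 x hR hx).symm
  · rw [glue, dif_neg hR]
    obtain rfl : (hG.cover x x.2 hR).choose = i := by
      by_contra hne
      exact hR (hG.inter_subset hne ⟨(hG.cover x x.2 hR).choose_spec, hx⟩)
    rfl

lemma glue_mem (hφ : ∀ u v : R, r u v → s (φ u) (φ v)) (Ψ : ∀ i, homsExtending r s (D' i) φ) :
    hG.glue φ Ψ ∈ homsExtending r s D φ := by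
  refine ⟨fun u v huv => ?_, fun x hx _ => hG.glue_of_mem_base Ψ hx⟩
  rcases hG.rel u u.2 v v.2 huv with ⟨hu, hv⟩ | ⟨i, hu, hv⟩
  · rw [hG.glue_of_mem_base Ψ hu, hG.glue_of_mem_base Ψ hv]
    exact hφ _ _ huv
  · rw [hG.glue_of_mem Ψ hu, hG.glue_of_mem Ψ hv]
    exact (Ψ i).2.1 _ _ huv

noncomputable def homsExtendingEquivPi (hφ : ∀ u v : R, r u v → s (φ u) (φ v)) :
    homsExtending r s D φ ≃ ∀ i, homsExtending r s (D' i) φ where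
  toFun ψ i := homsExtending.restrict (hG.subset i) ψ
  invFun Ψ := ⟨hG.glue φ Ψ, hG.glue_mem hφ Ψ⟩
  left_inv ψ := Subtype.ext <| funext fun x => by
    dsimp only
    by_cases hx : x.1 ∈ R
    · exact (hG.glue_of_mem_base _ hx).trans (ψ.2.2 x hx x.2).symm
    · obtain ⟨i, hi⟩ := hG.cover x x.2 hx
      exact hG.glue_of_mem _ hi
  right_inv Ψ := funext fun i => Subtype.ext <| funext fun y =>
    hG.glue_of_mem Ψ (x := Set.inclusion (hG.subset i) y) y.2

include hG in
theorem ncard_homsExtending [Fintype κ] (hφ : ∀ u v : R, r u v → s (φ u) (φ v)) :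
    (homsExtending r s D φ).ncard = ∏ i, (homsExtending r s (D' i) φ).ncard := by
  simp only [← Nat.card_coe_set_eq]
  exact (Nat.card_congr (hG.homsExtendingEquivPi hφ)).trans Nat.card_pi

end IsGluing

end Gluing

section DagTreeDecomposition

variable {V ι : Type*} {r : V → V → Prop}

lemma mem_reach_of_rel {X : Set V} {x y : V} (hx : x ∈ Reach r X) (hxy : r x y) :
    y ∈ Reach r X :=
  let ⟨u, hu, hux⟩ := hx
  ⟨u, hu, hux.tail hxy⟩

lemma mem_reach_downClosure {T : SimpleGraph ι} {ρ c : ι} {bag : ι → Set V} {x : V} :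
    x ∈ Reach r (DownClosure T ρ bag c) ↔ ∃ j, InSubtree T ρ c j ∧ x ∈ Reach r (bag j) := by
  simp only [Reach, DownClosure, Set.mem_iUnion]
  aesop

lemma IsDTD.isGluing {T : SimpleGraph ι} {bag : ι → Set V} (h : IsDTD r T bag) (ρ b : ι) :
    IsGluing r (Reach r (bag b)) (Reach r (DownClosure T ρ bag b))
      fun i : {i // IsChild T ρ b i} => Reach r (DownClosure T ρ bag i.1) where
  subset i x hx := by
    obtain ⟨j, hj, hx⟩ := mem_reach_downClosure.mp hx
    exact mem_reach_downClosure.mpr ⟨j, i.2.2.trans hj, hx⟩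
  cover x hx hxb := by
    obtain ⟨j, hj, hxj⟩ := mem_reach_downClosure.mp hx
    rcases hj.eq_or_exists_isChild h.isTree with rfl | ⟨i, hi, hij⟩
    · exact absurd hxj hxb
    · exact ⟨⟨i, hi⟩, mem_reach_downClosure.mpr ⟨j, hij, hxj⟩⟩
  inter_subset i i' hii' x := by
    rintro ⟨hx, hx'⟩
    obtain ⟨j, hj, hx⟩ := mem_reach_downClosure.mp hx
    obtain ⟨k, hk, hx'⟩ := mem_reach_downClosure.mp hx'
    obtain ⟨p, hp, hbp⟩ := exists_isPath_mem_support_of_isChild h.isTree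
      (Subtype.coe_ne_coe.mpr hii') i.2 i'.2 hj hk
    exact h.path_prop b j k p hp hbp ⟨hx, hx'⟩
  rel u hu v _ huv := by
    obtain ⟨j, hj, huj⟩ := mem_reach_downClosure.mp hu
    have hvj := mem_reach_of_rel huj huv
    rcases hj.eq_or_exists_isChild h.isTree with rfl | ⟨i, hi, hij⟩
    · exact Or.inl ⟨huj, hvj⟩
    · exact Or.inr ⟨⟨i, hi⟩, mem_reach_downClosure.mpr ⟨j, hij, huj⟩,
        mem_reach_downClosure.mpr ⟨j, hij, hvj⟩⟩

end DagTreeDecomposition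

open scoped Classical in
theorem dtd_hom_count_prod_general {V ι W : Type*} [Fintype ι]
    (r : V → V → Prop)
    (s : W → W → Prop)
    (T : SimpleGraph ι) (bag : ι → Set V) (h : IsDTD r T bag) (ρ b : ι)
    (φB : ↥(Reach r (bag b)) → W)
    (hφB : ∀ u v : ↥(Reach r (bag b)), r u.1 v.1 → s (φB u) (φB v)) :
    Nonempty
      (↥{ψ : ↥(Reach r (DownClosure T ρ bag b)) → W |
          (∀ u v, r u.1 v.1 → s (ψ u) (ψ v)) ∧
          ∀ (x : V) (hx : x ∈ Reach r (bag b))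
            (hx' : x ∈ Reach r (DownClosure T ρ bag b)),
            ψ ⟨x, hx'⟩ = φB ⟨x, hx⟩} ≃
        ∀ i : {i : ι // IsChild T ρ b i},
          ↥{ψ : ↥(Reach r (DownClosure T ρ bag i.1)) → W |
            (∀ u v, r u.1 v.1 → s (ψ u) (ψ v)) ∧
            ∀ (x : V) (hx : x ∈ Reach r (bag b))
              (hx' : x ∈ Reach r (DownClosure T ρ bag i.1)),
              ψ ⟨x, hx'⟩ = φB ⟨x, hx⟩}) ∧
    {ψ : ↥(Reach r (DownClosure T ρ bag b)) → W |
        (∀ u v, r u.1 v.1 → s (ψ u) (ψ v)) ∧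
        ∀ (x : V) (hx : x ∈ Reach r (bag b))
          (hx' : x ∈ Reach r (DownClosure T ρ bag b)),
          ψ ⟨x, hx'⟩ = φB ⟨x, hx⟩}.ncard =
      ∏ i : {i : ι // IsChild T ρ b i},
        {ψ : ↥(Reach r (DownClosure T ρ bag i.1)) → W |
          (∀ u v, r u.1 v.1 → s (ψ u) (ψ v)) ∧
          ∀ (x : V) (hx : x ∈ Reach r (bag b))
            (hx' : x ∈ Reach r (DownClosure T ρ bag i.1)),
            ψ ⟨x, hx'⟩ = φB ⟨x, hx⟩}.ncard := by
  have hG := h.isGluing ρ b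
  exact ⟨⟨hG.homsExtendingEquivPi hφB⟩, hG.ncard_homsExtending hφB⟩

open scoped Classical in
/-- Let `T` (rooted at `ρ`) be a dag tree decomposition of the dag `r`, `b` a bag, and
`φB` a homomorphism from the subgraph of `r` reachable from the bag of `b` to the dag
`s`. Then the homomorphisms from the subgraph reachable from the down-closure of `b`
extending `φB` are in bijection with the product, over the children `i` of `b`, of the
sets of homomorphisms from the subgraph reachable from the down-closure of `i`
extending `φB`; consequently the corresponding counts satisfy the product formula. -/
theorem dtd_hom_count_prod {V ι W : Type*} [Fintype V] [Fintype ι] [Fintype W]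
    (r : V → V → Prop) (hr : DigraphAcyclic r)
    (s : W → W → Prop) (hs : DigraphAcyclic s)
    (T : SimpleGraph ι) (bag : ι → Set V) (h : IsDTD r T bag) (ρ b : ι)
    (φB : ↥(Reach r (bag b)) → W)
    (hφB : ∀ u v : ↥(Reach r (bag b)), r u.1 v.1 → s (φB u) (φB v)) :
    Nonempty
      (↥{ψ : ↥(Reach r (DownClosure T ρ bag b)) → W |
          (∀ u v, r u.1 v.1 → s (ψ u) (ψ v)) ∧
          ∀ (x : V) (hx : x ∈ Reach r (bag b))
            (hx' : x ∈ Reach r (DownClosure T ρ bag b)),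
            ψ ⟨x, hx'⟩ = φB ⟨x, hx⟩} ≃
        ∀ i : {i : ι // IsChild T ρ b i},
          ↥{ψ : ↥(Reach r (DownClosure T ρ bag i.1)) → W |
            (∀ u v, r u.1 v.1 → s (ψ u) (ψ v)) ∧
            ∀ (x : V) (hx : x ∈ Reach r (bag b))
              (hx' : x ∈ Reach r (DownClosure T ρ bag i.1)),
              ψ ⟨x, hx'⟩ = φB ⟨x, hx⟩}) ∧
    {ψ : ↥(Reach r (DownClosure T ρ bag b)) → W |
        (∀ u v, r u.1 v.1 → s (ψ u) (ψ v)) ∧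
        ∀ (x : V) (hx : x ∈ Reach r (bag b))
          (hx' : x ∈ Reach r (DownClosure T ρ bag b)),
          ψ ⟨x, hx'⟩ = φB ⟨x, hx⟩}.ncard =
      ∏ i : {i : ι // IsChild T ρ b i},
        {ψ : ↥(Reach r (DownClosure T ρ bag i.1)) → W |
          (∀ u v, r u.1 v.1 → s (ψ u) (ψ v)) ∧
          ∀ (x : V) (hx : x ∈ Reach r (bag b))
            (hx' : x ∈ Reach r (DownClosure T ρ bag i.1)),
            ψ ⟨x, hx'⟩ = φB ⟨x, hx⟩}.ncard :=
  dtd_hom_count_prod_general r s T bag h ρ b φB hφB
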